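/- arXiv:0704.2453 — 6 statements merged into one kernel-verified Lean document; each statement's English description precedes it below -/
import Mathlib

section
/- Let x₀ be a positive integer with distinct prime factorization x₀ = q₁^β₁ ⋯ q_r^β_r, and let q be a prime with q ∤ x₀ such that q - 1 divides x₀ / (q₁ ⋯ q_r). Then y₀ = x₀ · q / (q - 1) is an integer distinct from x₀ and satisfies φ(y₀) = φ(x₀). -/
/-!
Write `x₀ = (q - 1) * m`. The hypothesis on `x₀ / rad x₀` forces every prime of `q - 1` to divide
`m`, so `φ x₀ = (q - 1) * φ m`; since `q ∤ m`, also `φ (q * m) = (q - 1) * φ m`, and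
`y₀ = q * m` differs from `x₀` because `q ∣ y₀` but `q ∤ x₀`.
-/

namespace Nat

theorem totient_mul_of_primeFactors_subset {a b : ℕ} (h : a.primeFactors ⊆ b.primeFactors) :
    φ (a * b) = a * φ b := by
  rcases eq_or_ne a 0 with rfl | ha
  · simp
  rcases eq_or_ne b 0 with rfl | hb
  · simp
  rw [totient_eq_div_primeFactors_mul, totient_eq_div_primeFactors_mul b,
    primeFactors_mul ha hb, Finset.union_eq_right.mpr h,
    Nat.mul_div_assoc a (prod_primeFactors_dvd b), mul_assoc]

theorem primeFactors_subset_primeFactors_div {n d : ℕ} (hn : n ≠ 0)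
    (hd : d ∣ n / ∏ p ∈ n.primeFactors, p) : d.primeFactors ⊆ (n / d).primeFactors := by
  obtain ⟨k, hk⟩ := hd
  have hn_eq : n = d * ((∏ p ∈ n.primeFactors, p) * k) := by
    rw [mul_left_comm, ← hk, Nat.mul_div_cancel' (prod_primeFactors_dvd n)]
  have hprod_ne : d * ((∏ p ∈ n.primeFactors, p) * k) ≠ 0 := hn_eq ▸ hn
  have hquot : n / d = (∏ p ∈ n.primeFactors, p) * k := by
    nth_rw 1 [hn_eq]
    exact Nat.mul_div_cancel_left _ (pos_of_ne_zero (left_ne_zero_of_mul hprod_ne))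
  calc d.primeFactors ⊆ n.primeFactors := primeFactors_mono ⟨_, hn_eq⟩ hn
    _ ⊆ (n / d).primeFactors := by
      rw [← prod_primeFactors_dvd_iff (hquot ▸ right_ne_zero_of_mul hprod_ne), hquot]
      exact dvd_mul_right _ _

end Nat

theorem stmt_3 (x₀ q : ℕ) (hx : 0 < x₀) (hq : q.Prime) (hqx : ¬ q ∣ x₀)
    (hdvd : (q - 1) ∣ x₀ / ∏ p ∈ x₀.primeFactors, p) :
    (q - 1) ∣ x₀ * q ∧ x₀ * q / (q - 1) ≠ x₀ ∧
      Nat.totient (x₀ * q / (q - 1)) = Nat.totient x₀ := by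
  have hq1 : 0 < q - 1 := Nat.sub_pos_of_lt hq.one_lt
  have hsub := Nat.primeFactors_subset_primeFactors_div hx.ne' hdvd
  obtain ⟨m, hm⟩ : q - 1 ∣ x₀ := hdvd.trans (Nat.div_dvd_of_dvd (Nat.prod_primeFactors_dvd x₀))
  rw [hm, Nat.mul_div_cancel_left _ hq1] at hsub
  have hy : x₀ * q / (q - 1) = q * m := by
    rw [hm, mul_assoc, mul_comm m q, Nat.mul_div_cancel_left _ hq1]
  have hqm : ¬ q ∣ m := fun h => hqx (hm ▸ h.mul_left _)
  refine ⟨hm ▸ ⟨q * m, by ring⟩, ?_, ?_⟩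
  · rw [hy]
    exact fun h => hqx (h ▸ dvd_mul_right q m)
  · rw [hy, Nat.totient_mul_of_prime_of_not_dvd hq hqm, hm,
      Nat.totient_mul_of_primeFactors_subset hsub]
end

section
/- If x₀ ≥ 2 is a positive integer such that φ(x) = φ(x₀) has x₀ as its unique positive solution, then 36 divides x₀ (i.e., 2²·3² ∣ x₀). -/
/-!
Each way in which `36 ∣ x₀` can fail produces a second solution of `φ y = φ x₀`: for odd `x₀`
take `2 x₀`; for `x₀ = 2k` with `k` odd take `k`; for `x₀ = 2k` with `k` even and `3 ∤ k` take
`3k`; for `x₀ = 3m` with `m` even and `3 ∤ m` take `2m`.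
-/

namespace Nat

theorem totient_two_mul_of_not_two_dvd {n : ℕ} (h : ¬2 ∣ n) : φ (2 * n) = φ n := by
  rw [totient_mul_of_prime_of_not_dvd prime_two h, Nat.add_one_sub_one, one_mul]

theorem totient_three_mul_eq_totient_two_mul {n : ℕ} (h2 : 2 ∣ n) (h3 : ¬3 ∣ n) :
    φ (3 * n) = φ (2 * n) := by
  rw [totient_mul_of_prime_of_not_dvd prime_three h3, totient_mul_of_prime_of_dvd prime_two h2]

end Nat

theorem stmt_7_general (x₀ : ℕ)
    (huniq : ∀ y : ℕ, 0 < y → Nat.totient y = Nat.totient x₀ → y = x₀) :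
    2 ^ 2 * 3 ^ 2 ∣ x₀ := by
  rcases Nat.eq_zero_or_pos x₀ with rfl | hpos
  · exact dvd_zero _
  have h2 : 2 ∣ x₀ := by
    by_contra h
    have := huniq (2 * x₀) (by omega) (Nat.totient_two_mul_of_not_two_dvd h)
    omega
  have h4 : 4 ∣ x₀ := by
    by_contra h
    obtain ⟨k, rfl⟩ := h2
    have := huniq k (by omega) (Nat.totient_two_mul_of_not_two_dvd (by omega)).symm
    omega
  have h3 : 3 ∣ x₀ := by
    by_contra h
    obtain ⟨k, rfl⟩ := h2
    have := huniq (3 * k) (by omega)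
      (Nat.totient_three_mul_eq_totient_two_mul (by omega) (by omega))
    omega
  have h9 : 9 ∣ x₀ := by
    by_contra h
    obtain ⟨m, rfl⟩ := h3
    have := huniq (2 * m) (by omega)
      (Nat.totient_three_mul_eq_totient_two_mul (by omega) (by omega)).symm
    omega
  omega

theorem stmt_7 (x₀ : ℕ) (hx : 2 ≤ x₀)
    (huniq : ∀ y : ℕ, 0 < y → Nat.totient y = Nat.totient x₀ → y = x₀) :
    2 ^ 2 * 3 ^ 2 ∣ x₀ :=
  stmt_7_general x₀ huniq
end

section
/- If x₀ ≥ 2 is a positive integer such that φ(x) = φ(x₀) has x₀ as its unique positive solution, then 2²·3²·7² divides x₀. -/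
/-!
If `p ∤ m` and `p - 1 ∣ m`, then `φ (p * m) = (p - 1) * φ m = φ ((p - 1) * m)`. So if `x` is
the only positive solution of `φ y = φ x`, it can be neither `(p - 1) * m` nor `p * m` with
`p ∤ m`: hence `(p - 1)² ∣ x` forces `p² ∣ x`. Starting from `1² ∣ x`, this gives in turn
`2² ∣ x`, `3² ∣ x`, and then, as `(7 - 1)² = 2² · 3²`, also `7² ∣ x`.
-/

open Nat

theorem Nat.totient_mul_of_dvd {d n : ℕ} (h : d ∣ n) : φ (d * n) = d * φ n := by
  rcases d.eq_zero_or_pos with rfl | hd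
  · simp
  have key := totient_gcd_mul_totient_mul d n
  rw [gcd_eq_left h, mul_assoc] at key
  simpa [(totient_pos.2 hd).ne', mul_comm] using key

theorem Nat.totient_prime_mul_eq_totient_pred_mul {p m : ℕ} (hp : p.Prime) (hpm : ¬p ∣ m)
    (hm : p - 1 ∣ m) : φ (p * m) = φ ((p - 1) * m) := by
  rw [totient_mul_of_prime_of_not_dvd hp hpm, totient_mul_of_dvd hm]

def TotientUnique (x : ℕ) : Prop :=
  ∀ y : ℕ, 0 < y → φ y = φ x → y = x

theorem TotientUnique.prime_sq_dvd {x p : ℕ} (hu : TotientUnique x) (hp : p.Prime)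
    (h : (p - 1) ^ 2 ∣ x) : p ^ 2 ∣ x := by
  rcases x.eq_zero_or_pos with rfl | hx
  · exact dvd_zero _
  have hp1 : 0 < p - 1 := Nat.sub_pos_of_lt hp.one_lt
  have hp1x : p - 1 ∣ x := (dvd_pow_self _ two_ne_zero).trans h
  have hpx : p ∣ x := by
    by_contra hpx
    obtain ⟨m, rfl⟩ := hp1x
    have hm : p - 1 ∣ m := Nat.dvd_of_mul_dvd_mul_left hp1 (by rwa [← pow_two])
    have hpm : ¬p ∣ m := fun hpm => hpx (dvd_mul_of_dvd_right hpm _)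
    have hm0 : 0 < m := pos_of_mul_pos_right hx (zero_le _)
    have hy := hu (p * m) (Nat.mul_pos hp.pos hm0)
      (totient_prime_mul_eq_totient_pred_mul hp hpm hm)
    have := Nat.eq_of_mul_eq_mul_right hm0 hy
    omega
  by_contra hp2
  obtain ⟨m, rfl⟩ := hpx
  have hpm : ¬p ∣ m := fun hpm => hp2 (by rw [pow_two]; exact mul_dvd_mul_left p hpm)
  have hcop : Coprime (p - 1) p := (coprime_self_sub_left hp.one_le).mpr (coprime_one_left p)
  have hm : p - 1 ∣ m := hcop.dvd_of_dvd_mul_left hp1x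
  have hm0 : 0 < m := pos_of_mul_pos_right hx (zero_le _)
  have hy := hu ((p - 1) * m) (by positivity)
    (totient_prime_mul_eq_totient_pred_mul hp hpm hm).symm
  have := Nat.eq_of_mul_eq_mul_right hm0 hy
  omega

theorem stmt_8_general (x₀ : ℕ)
    (huniq : ∀ y : ℕ, 0 < y → Nat.totient y = Nat.totient x₀ → y = x₀) :
    2 ^ 2 * 3 ^ 2 * 7 ^ 2 ∣ x₀ := by
  have hu : TotientUnique x₀ := huniq
  have h4 : 2 ^ 2 ∣ x₀ := hu.prime_sq_dvd prime_two (by simp)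
  have h9 : 3 ^ 2 ∣ x₀ := hu.prime_sq_dvd prime_three h4
  have h36 : 2 ^ 2 * 3 ^ 2 ∣ x₀ := Coprime.mul_dvd_of_dvd_of_dvd (by norm_num) h4 h9
  have h49 : 7 ^ 2 ∣ x₀ := hu.prime_sq_dvd (by norm_num) (by simpa using h36)
  exact Coprime.mul_dvd_of_dvd_of_dvd (by norm_num) h36 h49

theorem stmt_8 (x₀ : ℕ) (hx : 2 ≤ x₀)
    (huniq : ∀ y : ℕ, 0 < y → Nat.totient y = Nat.totient x₀ → y = x₀) :
    2 ^ 2 * 3 ^ 2 * 7 ^ 2 ∣ x₀ :=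
  stmt_8_general x₀ huniq
end

section
/- If x₀ ≥ 2 is a positive integer such that φ(x) = φ(x₀) has x₀ as its unique positive solution, then 2²·3²·7²·43² divides x₀. -/
/-!
If `p` is a prime not dividing `k` and every prime factor of `p - 1` divides `k`, then
`φ (p * k) = (p - 1) * φ k = φ ((p - 1) * k)`. So a solution `x` of `φ y = φ x` that is unique can
neither have the shape `(p - 1) * k` nor `p * k` with such `k`. Applied in turn to
`p = 2, 3, 7, 43`, where each `p - 1` is a product of the earlier primes, this forces `p ^ 2 ∣ x`.
-/

open Nat

theorem Nat.totient_mul_of_primeFactors_subset_s9 {m n : ℕ} (h : m.primeFactors ⊆ n.primeFactors) :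
    φ (m * n) = m * φ n := by
  rcases eq_or_ne m 0 with rfl | hm
  · simp
  rcases eq_or_ne n 0 with rfl | hn
  · simp
  rw [totient_eq_div_primeFactors_mul, totient_eq_div_primeFactors_mul n, primeFactors_mul hm hn,
    Finset.union_eq_right.2 h, Nat.mul_div_assoc _ (prod_primeFactors_dvd n), mul_assoc]

theorem Nat.totient_prime_mul_eq_totient_sub_one_mul {p k : ℕ} (hp : p.Prime) (hpk : ¬p ∣ k)
    (h : (p - 1).primeFactors ⊆ k.primeFactors) : φ (p * k) = φ ((p - 1) * k) := by
  rw [totient_mul_of_prime_of_not_dvd hp hpk, totient_mul_of_primeFactors_subset_s9 h]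

namespace TotientUnique

variable {x p : ℕ}

theorem eq_of_totient_mul_eq {a b k : ℕ} (hx : TotientUnique (a * k)) (hk : 0 < k) (hb : 0 < b)
    (h : φ (b * k) = φ (a * k)) : b = a :=
  Nat.eq_of_mul_eq_mul_right hk (hx _ (by positivity) h)

theorem prime_dvd (hx : TotientUnique x) (hx0 : 0 < x) (hp : p.Prime) (h : (p - 1) ^ 2 ∣ x) :
    p ∣ x := by
  by_contra hpx
  obtain ⟨k, rfl⟩ : p - 1 ∣ x := (dvd_pow_self _ two_ne_zero).trans h
  have hk : 0 < k := Nat.pos_of_mul_pos_left hx0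
  have hpk : ¬p ∣ k := fun hd => hpx (dvd_mul_of_dvd_right hd _)
  have hdk : p - 1 ∣ k := by
    rw [sq] at h
    exact (mul_dvd_mul_iff_left (by have := hp.two_le; omega)).1 h
  have heq := hx.eq_of_totient_mul_eq hk hp.pos
    (totient_prime_mul_eq_totient_sub_one_mul hp hpk (primeFactors_mono hdk hk.ne'))
  have := hp.pos
  omega

theorem sq_dvd_of_dvd (hx : TotientUnique x) (hx0 : 0 < x) (hp : p.Prime) (hpx : p ∣ x)
    (h : p - 1 ∣ x) : p ^ 2 ∣ x := by
  by_contra hp2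
  obtain ⟨k, rfl⟩ := hpx
  have hk : 0 < k := Nat.pos_of_mul_pos_left hx0
  have hpk : ¬p ∣ k := fun hd => hp2 (by rw [sq]; exact mul_dvd_mul_left p hd)
  have hdk : p - 1 ∣ k :=
    Coprime.dvd_of_dvd_mul_left ((coprime_self_sub_left hp.one_le).2 (coprime_one_left p)) h
  have heq := hx.eq_of_totient_mul_eq hk (by have := hp.two_le; omega)
    (totient_prime_mul_eq_totient_sub_one_mul hp hpk (primeFactors_mono hdk hk.ne')).symm
  have := hp.pos
  omega

theorem sq_dvd (hx : TotientUnique x) (hx0 : 0 < x) (hp : p.Prime) (h : (p - 1) ^ 2 ∣ x) :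
    p ^ 2 ∣ x :=
  hx.sq_dvd_of_dvd hx0 hp (hx.prime_dvd hx0 hp h) ((dvd_pow_self _ two_ne_zero).trans h)

end TotientUnique

theorem stmt_9 (x₀ : ℕ) (hx : 2 ≤ x₀)
    (huniq : ∀ y : ℕ, 0 < y → Nat.totient y = Nat.totient x₀ → y = x₀) :
    2 ^ 2 * 3 ^ 2 * 7 ^ 2 * 43 ^ 2 ∣ x₀ := by
  have hu : TotientUnique x₀ := huniq
  have hx0 : 0 < x₀ := by omega
  have h2 : 2 ^ 2 ∣ x₀ := hu.sq_dvd hx0 prime_two (by simp)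
  have h3 : 3 ^ 2 ∣ x₀ := hu.sq_dvd hx0 prime_three h2
  have h6 : 2 ^ 2 * 3 ^ 2 ∣ x₀ := Coprime.mul_dvd_of_dvd_of_dvd (by norm_num) h2 h3
  have h7 : 7 ^ 2 ∣ x₀ := hu.sq_dvd hx0 (by norm_num) (by norm_num at h6 ⊢; exact h6)
  have h42 : 2 ^ 2 * 3 ^ 2 * 7 ^ 2 ∣ x₀ := Coprime.mul_dvd_of_dvd_of_dvd (by norm_num) h6 h7
  have h43 : 43 ^ 2 ∣ x₀ := hu.sq_dvd hx0 (by norm_num) (by norm_num at h42 ⊢; exact h42)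
  exact Coprime.mul_dvd_of_dvd_of_dvd (by norm_num) h42 h43
end

section
/- If x₀ is a positive integer with 8 ∣ x₀ (i.e., 2³ divides x₀) and φ(x) = φ(x₀) has x₀ as its unique positive solution, then 25 divides x₀. -/
/-!
Multiplying by 4 and multiplying by 5 both scale φ by 4 on numbers that are even and prime to 5.
If 25 ∤ x₀, then x₀ = 4m or x₀ = 5m for such an m (according as 5 ∤ x₀ or 5 ∥ x₀), and the other
multiple is a second solution.
-/

open Nat

theorem totient_four_mul {m : ℕ} (hm : 2 ∣ m) : φ (4 * m) = 4 * φ m := by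
  rw [show 4 * m = 2 * (2 * m) by ring,
    totient_mul_of_prime_of_dvd prime_two (dvd_mul_right 2 m),
    totient_mul_of_prime_of_dvd prime_two hm]
  ring

theorem totient_five_mul {m : ℕ} (hm : ¬ 5 ∣ m) : φ (5 * m) = 4 * φ m := by
  have h5 : Nat.Prime 5 := by norm_num
  rw [totient_mul (h5.coprime_iff_not_dvd.mpr hm), totient_prime h5]

theorem totient_four_mul_eq_totient_five_mul {m : ℕ} (h2 : 2 ∣ m) (h5 : ¬ 5 ∣ m) :
    φ (4 * m) = φ (5 * m) := by
  rw [totient_four_mul h2, totient_five_mul h5]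

theorem exists_eq_four_mul_or_eq_five_mul {x : ℕ} (h8 : 8 ∣ x) (h25 : ¬ 25 ∣ x) :
    ∃ m, 2 ∣ m ∧ ¬ 5 ∣ m ∧ (x = 4 * m ∨ x = 5 * m) := by
  obtain ⟨k, rfl⟩ := h8
  by_cases h5 : 5 ∣ k
  · obtain ⟨n, rfl⟩ := h5
    refine ⟨8 * n, dvd_mul_of_dvd_left (by norm_num) n, ?_, Or.inr (by ring)⟩
    rintro ⟨j, hj⟩
    exact h25 ⟨8 * j, by omega⟩
  · refine ⟨2 * k, dvd_mul_right 2 k, ?_, Or.inl (by ring)⟩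
    rintro ⟨j, hj⟩
    exact h5 ⟨2 * j, by omega⟩

theorem stmt_10_general (x₀ : ℕ) (h8 : 2 ^ 3 ∣ x₀)
    (huniq : ∀ y : ℕ, 0 < y → Nat.totient y = Nat.totient x₀ → y = x₀) :
    25 ∣ x₀ := by
  by_contra h25
  obtain ⟨m, h2, h5, hx⟩ := exists_eq_four_mul_or_eq_five_mul (by simpa using h8) h25
  have hm : 0 < m := pos_of_ne_zero (by rintro rfl; exact h25 (by simp_all))
  have htot := totient_four_mul_eq_totient_five_mul h2 h5
  rcases hx with rfl | rfl
  · have := huniq (5 * m) (by positivity) htot.symm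
    omega
  · have := huniq (4 * m) (by positivity) htot
    omega

theorem stmt_10 (x₀ : ℕ) (hx : 0 < x₀) (h8 : 2 ^ 3 ∣ x₀)
    (huniq : ∀ y : ℕ, 0 < y → Nat.totient y = Nat.totient x₀ → y = x₀) :
    25 ∣ x₀ :=
  stmt_10_general x₀ h8 huniq
end

section
/- The number of solutions x of φ(x) = n is at most ∏_{i=1}^{s}(a_i + 2), where p₁ < ⋯ < p_s are the primes ≤ n + 1 and a_i is the least natural number with p_i^{a_i} ≥ n. -/
/-!
If `φ x = n` and `p ^ k ∥ x` with `k ≥ 1`, then `φ (p ^ k) = p ^ (k - 1) * (p - 1)` divides `n`.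
Hence `p ≤ n + 1`, and `p ^ (k - 1) ≤ n ≤ p ^ a` gives `k ≤ a + 1`, where `a = ⌈log_p n⌉`.
So every solution divides `N = ∏_{p ≤ n + 1} p ^ (a_p + 1)`, which has `∏ (a_p + 2)` divisors.
-/

open Finset ArithmeticFunction

namespace Nat

lemma sInf_setOf_le_pow_eq_clog {b : ℕ} (hb : 1 < b) (n : ℕ) :
    sInf {a : ℕ | n ≤ b ^ a} = clog b n :=
  IsLeast.csInf_eq ⟨le_pow_clog hb n, fun _ ha => clog_le_of_le_pow ha⟩

lemma card_divisors_prod_prime_pow {s : Finset ℕ} (hs : ∀ p ∈ s, p.Prime) (e : ℕ → ℕ) :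
    #(∏ p ∈ s, p ^ e p).divisors = ∏ p ∈ s, (e p + 1) := by
  rw [← sigma_zero_apply, isMultiplicative_sigma.map_prod _ s fun p hp q hq hpq =>
    ((coprime_primes (hs p hp) (hs q hq)).2 hpq).pow _ _]
  exact prod_congr rfl fun p hp => sigma_zero_apply_prime_pow (hs p hp)

lemma dvd_prod_prime_pow_of_factorization_le {x : ℕ} {s : Finset ℕ} {e : ℕ → ℕ}
    (hx : x ≠ 0) (hxs : x.primeFactors ⊆ s) (he : ∀ p ∈ s, x.factorization p ≤ e p) :
    x ∣ ∏ p ∈ s, p ^ e p :=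
  calc x = ∏ p ∈ x.primeFactors, p ^ x.factorization p :=
        (prod_factorization_pow_eq_self hx).symm
    _ ∣ ∏ p ∈ x.primeFactors, p ^ e p :=
      prod_dvd_prod_of_dvd _ _ fun p hp => pow_dvd_pow p (he p (hxs hp))
    _ ∣ ∏ p ∈ s, p ^ e p := prod_dvd_prod_of_subset _ _ _ hxs

lemma sub_one_dvd_totient {x p : ℕ} (hp : p.Prime) (hpx : p ∣ x) : p - 1 ∣ φ x :=
  totient_prime hp ▸ totient_dvd_of_dvd hpx

lemma pow_factorization_sub_one_dvd_totient (x : ℕ) {p : ℕ} (hp : p.Prime) :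
    p ^ (x.factorization p - 1) ∣ φ x := by
  rcases Nat.eq_zero_or_pos (x.factorization p) with h | h
  · simp [h]
  · have h_dvd := totient_dvd_of_dvd (ordProj_dvd x p)
    rw [totient_prime_pow hp h] at h_dvd
    exact (dvd_mul_right _ _).trans h_dvd

lemma le_totient_add_one_of_prime_dvd {x p : ℕ} (hx : x ≠ 0) (hp : p.Prime) (hpx : p ∣ x) :
    p ≤ φ x + 1 := by
  have := le_of_dvd (totient_pos.2 (pos_of_ne_zero hx)) (sub_one_dvd_totient hp hpx)
  omega

lemma factorization_le_clog_totient_add_one {x p : ℕ} (hx : x ≠ 0) (hp : p.Prime) :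
    x.factorization p ≤ clog p (φ x) + 1 := by
  have h_le : p ^ (x.factorization p - 1) ≤ p ^ clog p (φ x) :=
    (le_of_dvd (totient_pos.2 (pos_of_ne_zero hx))
      (pow_factorization_sub_one_dvd_totient x hp)).trans (le_pow_clog hp.one_lt _)
  have := (Nat.pow_le_pow_iff_right hp.one_lt).1 h_le
  omega

lemma dvd_prod_prime_pow_clog_totient {x : ℕ} (hx : x ≠ 0) :
    x ∣ ∏ p ∈ (range (φ x + 2)).filter Nat.Prime, p ^ (clog p (φ x) + 1) := by
  refine dvd_prod_prime_pow_of_factorization_le hx (fun p hp => ?_)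
    fun p hp => factorization_le_clog_totient_add_one hx (mem_filter.1 hp).2
  have hp' := prime_of_mem_primeFactors hp
  have := le_totient_add_one_of_prime_dvd hx hp' (dvd_of_mem_primeFactors hp)
  exact mem_filter.2 ⟨mem_range.2 (by omega), hp'⟩

end Nat

open Nat

theorem stmt_16_general (n : ℕ) :
    {x : ℕ | 0 < x ∧ Nat.totient x = n}.ncard ≤
      ∏ p ∈ (Finset.range (n + 2)).filter Nat.Prime, (sInf {a : ℕ | n ≤ p ^ a} + 2) := by
  set s := (range (n + 2)).filter Nat.Prime
  have hs : ∀ p ∈ s, p.Prime := fun p hp => (mem_filter.1 hp).2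
  have h_sub : {x : ℕ | 0 < x ∧ φ x = n} ⊆ (∏ p ∈ s, p ^ (clog p n + 1)).divisors := by
    rintro x ⟨hx, rfl⟩
    exact mem_divisors.2 ⟨dvd_prod_prime_pow_clog_totient hx.ne',
      prod_ne_zero_iff.2 fun p hp => pow_ne_zero _ (hs p hp).ne_zero⟩
  calc _ ≤ #(∏ p ∈ s, p ^ (clog p n + 1)).divisors :=
        (Set.ncard_le_ncard h_sub (Finset.finite_toSet _)).trans_eq (Set.ncard_coe_finset _)
    _ = ∏ p ∈ s, (clog p n + 2) := card_divisors_prod_prime_pow hs _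
    _ = _ := prod_congr rfl fun p hp => by rw [sInf_setOf_le_pow_eq_clog (hs p hp).one_lt]

theorem stmt_16 (n : ℕ) (hn : 2 ≤ n) :
    {x : ℕ | 0 < x ∧ Nat.totient x = n}.ncard ≤
      ∏ p ∈ (Finset.range (n + 2)).filter Nat.Prime, (sInf {a : ℕ | n ≤ p ^ a} + 2) :=
  stmt_16_general n
end
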